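/- arXiv:2505.15744 — 5 statements merged into one kernel-verified Lean document; each statement's English description precedes it below -/
import Mathlib

section
/- A finitely generated subgroup L of ℝⁿ is discrete if and only if the natural map L ⊗ ℝ → ℝⁿ is injective. -/
/-!
Being finitely generated and torsion-free, `L` is a free `ℤ`-module with a finite basis `v`, and
then `1 ⊗ v` is an `ℝ`-basis of `ℝ ⊗ L`; so the natural map is injective iff `v` is linearly
independent over `ℝ`. If it is, `v` extends to an `ℝ`-basis of the whole space, whose `ℤ`-span is
discrete and contains `L`. Conversely, for a discrete subgroup the `ℝ`-rank of its span equals its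
`ℤ`-rank, i.e. the `|v|` vectors of `v` span a real space of dimension `|v|`.
-/

open Module Submodule

theorem Module.Basis.injective_iff_linearIndependent_comp {R M N ι : Type*} [CommRing R]
    [AddCommGroup M] [AddCommGroup N] [Module R M] [Module R N] (b : Basis ι R M)
    (f : M →ₗ[R] N) : Function.Injective f ↔ LinearIndependent R (f ∘ b) := by
  have : ⇑(Finsupp.linearCombination R (f ∘ b)) = f ∘ b.repr.symm := by
    ext l
    simp [Finsupp.apply_linearCombination, b.repr_symm_apply]
  rw [LinearIndependent, this, EquivLike.injective_comp]

theorem Module.Basis.injective_liftBaseChange_iff_linearIndependent {R A M N ι : Type*}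
    [CommRing R] [CommRing A] [Algebra R A] [AddCommGroup M] [AddCommGroup N] [Module R M]
    [Module R N] [Module A N] [IsScalarTower R A N] (b : Basis ι R M) (f : M →ₗ[R] N) :
    Function.Injective (f.liftBaseChange A) ↔ LinearIndependent A (f ∘ b) := by
  rw [(b.baseChange A).injective_iff_linearIndependent_comp]
  congr!
  ext i
  simp

section Discrete

variable {E : Type*} [NormedAddCommGroup E] [NormedSpace ℝ E] [FiniteDimensional ℝ E]
  {ι : Type*} {v : ι → E}

theorem LinearIndependent.discreteTopology_span_int (hv : LinearIndependent ℝ v) :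
    DiscreteTopology (span ℤ (Set.range v)) := by
  let b := Basis.extend hv.linearIndepOn_id
  have hle : (span ℤ (Set.range v) : Set E) ⊆ span ℤ (Set.range b) := by
    refine span_mono ?_
    rw [Basis.range_extend]
    exact Basis.subset_extend _
  exact .of_subset (inferInstanceAs (DiscreteTopology (span ℤ (Set.range b)))) hle

theorem discreteTopology_span_int_iff_linearIndependent [Finite ι]
    (hv : LinearIndependent ℤ v) :
    DiscreteTopology (span ℤ (Set.range v)) ↔ LinearIndependent ℝ v := by
  refine ⟨fun hdisc ↦ ?_, LinearIndependent.discreteTopology_span_int⟩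
  have := Fintype.ofFinite ι
  rw [linearIndependent_iff_card_eq_finrank_span, Real.finrank_eq_int_finrank_of_discrete hdisc,
    Set.finrank, finrank_span_eq_card hv]

theorem AddSubgroup.discreteTopology_iff_injective_liftBaseChange {L : AddSubgroup E}
    (hL : L.FG) :
    DiscreteTopology L ↔ Function.Injective (L.subtype.toIntLinearMap.liftBaseChange ℝ) := by
  have : Module.Finite ℤ L :=
    Module.Finite.iff_addGroup_fg.mpr ((AddGroup.fg_iff_addSubgroup_fg L).mpr hL)
  have : IsAddTorsionFree E := .of_isTorsionFree ℝ E
  let b := Module.Free.chooseBasis ℤ L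
  have hspan : L.toIntSubmodule = span ℤ (Set.range (L.subtype.toIntLinearMap ∘ b)) := by
    rw [Set.range_comp, ← map_span, b.span_eq, Submodule.map_top]
    ext x
    simp
  rw [b.injective_liftBaseChange_iff_linearIndependent,
    ← discreteTopology_span_int_iff_linearIndependent, ← hspan]
  · rfl
  · exact b.linearIndependent.map' _ (LinearMap.ker_eq_bot.2 Subtype.val_injective)

end Discrete

theorem stmt_2 (n : ℕ) (L : AddSubgroup (Fin n → ℝ)) (hFG : L.FG) :
    DiscreteTopology L ↔
      Function.Injective (LinearMap.liftBaseChange ℝ (L.subtype.toIntLinearMap)) :=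
  AddSubgroup.discreteTopology_iff_injective_liftBaseChange hFG
end

section
/- If L is a finitely generated subgroup of ℝⁿ such that for every real subspace V of ℝⁿ of dimension d, the group L ∩ V can be generated by at most d elements, then L is discrete in ℝⁿ. -/
/-!
Let `V` be the real span of `L`. The hypothesis for `V` gives generators `s` of `L` with
`#s ≤ dim V`; since `s` also spans `V`, it is linearly independent. Extending `s` to a basis `b`
of the whole space puts `L` inside the lattice `span ℤ b`, which is discrete.
-/

open Submodule

theorem Submodule.span_addSubgroupClosure {R E : Type*} [Ring R] [AddCommGroup E]
    [Module R E] (s : Set E) : span R (AddSubgroup.closure s : Set E) = span R s := by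
  rw [← span_int_eq_addSubgroupClosure, coe_toAddSubgroup, span_span_of_tower]

theorem linearIndepOn_of_card_le_finrank_span {K E : Type*} [DivisionRing K] [AddCommGroup E]
    [Module K E] {s : Finset E} (hs : s.card ≤ Module.finrank K (span K (s : Set E))) :
    LinearIndepOn K id (s : Set E) := by
  show LinearIndependent K (Subtype.val : ↥(s : Set E) → E)
  rw [linearIndependent_iff_card_le_finrank_span, Subtype.range_coe]
  simpa [Set.finrank] using hs

theorem discreteTopology_addSubgroupClosure_of_linearIndepOn {E : Type*}
    [NormedAddCommGroup E] [NormedSpace ℝ E] [FiniteDimensional ℝ E] {s : Set E}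
    (hs : LinearIndepOn ℝ id s) : DiscreteTopology (AddSubgroup.closure s) := by
  let b := Module.Basis.extend hs
  have hle : AddSubgroup.closure s ≤ (span ℤ (Set.range b)).toAddSubgroup := by
    rw [AddSubgroup.closure_le, Module.Basis.range_extend]
    exact (hs.subset_extend _).trans subset_span
  exact DiscreteTopology.of_subset (inferInstance : DiscreteTopology (span ℤ (Set.range b))) hle

theorem stmt_3_general (n : ℕ) (L : AddSubgroup (Fin n → ℝ))
    (h : ∀ V : Submodule ℝ (Fin n → ℝ), ∃ s : Finset (Fin n → ℝ),
      s.card ≤ Module.finrank ℝ V ∧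
      AddSubgroup.closure (s : Set (Fin n → ℝ)) = L ⊓ V.toAddSubgroup) :
    DiscreteTopology L := by
  obtain ⟨s, hcard, hs⟩ := h (span ℝ L)
  have hL : AddSubgroup.closure (s : Set (Fin n → ℝ)) = L := by
    rwa [inf_eq_left.mpr fun x hx ↦ subset_span hx] at hs
  have hspan : span ℝ (s : Set (Fin n → ℝ)) = span ℝ L := by
    rw [← hL, span_addSubgroupClosure]
  rw [← hL]
  exact discreteTopology_addSubgroupClosure_of_linearIndepOn
    (linearIndepOn_of_card_le_finrank_span (hspan ▸ hcard))

theorem stmt_3 (n : ℕ) (L : AddSubgroup (Fin n → ℝ)) (hFG : L.FG)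
    (h : ∀ V : Submodule ℝ (Fin n → ℝ), ∃ s : Finset (Fin n → ℝ),
      s.card ≤ Module.finrank ℝ V ∧
      AddSubgroup.closure (s : Set (Fin n → ℝ)) = L ⊓ V.toAddSubgroup) :
    DiscreteTopology L :=
  stmt_3_general n L h
end

section
/- If L is a closed additive subgroup of ℝⁿ, then the connected component of the identity L⁰ of L is a real linear subspace of ℝⁿ. -/
/-!
Let `V = {x | ∀ t, t • x ∈ L}` be the largest subspace contained in `L`, and `W` a complement of
`V`. The closed subgroup `L ∩ W` contains no line, and a closed subgroup without lines is discrete: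
otherwise its nonzero elements accumulating at `0`, rescaled to the unit sphere, have a limit
point `a`, and integer multiples of those elements approximate every `t • a`. The projection onto
`W` along `V` maps `L` into `L ∩ W` (since `V ⊆ L`), so it is constant on the connected component
of `0`, which therefore lies in `V`. Conversely `V` is connected and contains `0`.
-/

open Filter Topology

theorem tendsto_floor_div_mul {ι : Type*} {l : Filter ι} {r : ι → ℝ}
    (hr0 : ∀ᶠ i in l, 0 < r i) (hr : Tendsto r l (𝓝 0)) (t : ℝ) :
    Tendsto (fun i => (⌊t / r i⌋ : ℝ) * r i) l (𝓝 t) := by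
  rw [tendsto_iff_norm_sub_tendsto_zero]
  refine squeeze_zero' (Eventually.of_forall fun _ => norm_nonneg _) ?_ hr
  filter_upwards [hr0] with i hri
  have hfract : t - ⌊t / r i⌋ * r i = Int.fract (t / r i) * r i := by
    rw [← Int.self_sub_floor]; field_simp
  rw [norm_sub_rev, hfract, Real.norm_eq_abs,
    abs_of_nonneg (mul_nonneg (Int.fract_nonneg _) hri.le)]
  exact mul_le_of_le_one_left hri.le (Int.fract_lt_one _).le

namespace AddSubgroup

section

variable (R : Type*) {E : Type*} [Semiring R] [AddCommGroup E] [Module R E]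

/-- The largest `R`-submodule contained in `L`, named after the lineality space of a convex cone. -/
def linealitySpace (L : AddSubgroup E) : Submodule R E where
  carrier := {x | ∀ t : R, t • x ∈ L}
  add_mem' hx hy t := by simpa only [smul_add] using add_mem (hx t) (hy t)
  zero_mem' t := by simpa only [smul_zero] using L.zero_mem
  smul_mem' c x hx t := by simpa only [smul_smul] using hx (t * c)

variable {R} {L : AddSubgroup E}

theorem coe_linealitySpace_subset : (L.linealitySpace R : Set E) ⊆ L :=
  fun x hx => by simpa only [one_smul, SetLike.mem_coe] using hx 1

end

section

variable {E : Type*} [AddCommGroup E] [Module ℝ E] [TopologicalSpace E] [ContinuousSMul ℝ E]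

theorem mem_linealitySpace_of_tendsto {M : AddSubgroup E}
    (hM : IsClosed (M : Set E)) {ι : Type*} {l : Filter ι} [l.NeBot] {x : ι → E} {r : ι → ℝ}
    (hxM : ∀ᶠ i in l, x i ∈ M) (hr0 : ∀ᶠ i in l, 0 < r i) (hr : Tendsto r l (𝓝 0)) {a : E}
    (ha : Tendsto (fun i => (r i)⁻¹ • x i) l (𝓝 a)) : a ∈ M.linealitySpace ℝ := by
  intro t
  refine hM.mem_of_tendsto ((tendsto_floor_div_mul hr0 hr t).smul ha) ?_
  filter_upwards [hxM, hr0] with i hxi hri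
  rw [smul_smul, mul_assoc, mul_inv_cancel₀ hri.ne', mul_one, Int.cast_smul_eq_zsmul]
  exact zsmul_mem hxi _

end

section

variable {E : Type*} [NormedAddCommGroup E] [NormedSpace ℝ E]

theorem discreteTopology_of_linealitySpace_eq_bot [ProperSpace E] {M : AddSubgroup E}
    (hM : IsClosed (M : Set E)) (hlin : M.linealitySpace ℝ = ⊥) : DiscreteTopology M := by
  rw [discreteTopology_iff_isOpen_singleton_zero, isOpen_singleton_iff_punctured_nhds]
  by_contra hne
  have : (𝓝[≠] (0 : M)).NeBot := ⟨hne⟩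
  set U := Ultrafilter.of (𝓝[≠] (0 : M))
  have hU : ↑U ≤ 𝓝[≠] (0 : M) := Ultrafilter.of_le _
  have hUne : ∀ᶠ y : M in U, (y : E) ≠ 0 :=
    hU (eventually_mem_nhdsWithin.mono fun y hy => by simpa using hy)
  have hU0 : Tendsto (fun y : M => ‖(y : E)‖) U (𝓝 0) :=
    (continuous_subtype_val.norm.tendsto' (0 : M) 0 norm_zero).mono_left
      (hU.trans nhdsWithin_le_nhds)
  obtain ⟨a, ha, hUa⟩ := (isCompact_sphere (0 : E) 1).ultrafilter_le_nhds'
    (U.map fun y : M => ‖(y : E)‖⁻¹ • (y : E)) (by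
      rw [Ultrafilter.mem_map]
      filter_upwards [hUne] with y hy
      simp [norm_smul, hy])
  have : a ∈ M.linealitySpace ℝ :=
    M.mem_linealitySpace_of_tendsto hM (Eventually.of_forall fun y => y.2)
      (hUne.mono fun y hy => norm_pos_iff.2 hy) hU0 hUa
  rw [hlin, Submodule.mem_bot] at this
  simp [this] at ha

variable [FiniteDimensional ℝ E]

theorem connectedComponentIn_zero_eq_linealitySpace {L : AddSubgroup E}
    (hL : IsClosed (L : Set E)) :
    connectedComponentIn (L : Set E) 0 = L.linealitySpace ℝ := by
  set V := L.linealitySpace ℝ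
  obtain ⟨W, hVW⟩ := V.exists_isCompl
  set P := W.projection V hVW.symm
  set M := L ⊓ W.toAddSubgroup
  have hM : IsClosed (M : Set E) := hL.inter W.closed_of_finiteDimensional
  have hMlin : M.linealitySpace ℝ = ⊥ := by
    refine eq_bot_iff.2 fun x hx => ?_
    have hxV : x ∈ V := fun t => (hx t).1
    have hxW : x ∈ W := by simpa using (hx 1).2
    exact hVW.disjoint.le_bot ⟨hxV, hxW⟩
  have hPM : Set.MapsTo P L M := by
    intro x hx
    have hxP : x - P x ∈ L := coe_linealitySpace_subset (Submodule.sub_projection_mem _ x)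
    exact ⟨by simpa using sub_mem hx hxP, Submodule.projection_apply_mem _ x⟩
  refine subset_antisymm (fun x hx => ?_)
    (V.convex.isPreconnected.subset_connectedComponentIn V.zero_mem
      coe_linealitySpace_subset)
  have hMdisc : IsDiscrete (M : Set E) :=
    isDiscrete_iff_discreteTopology.2 (discreteTopology_of_linealitySpace_eq_bot hM hMlin)
  have hPx : P x = P 0 :=
    isPreconnected_connectedComponentIn.constant_of_mapsTo
      hMdisc P.continuous_of_finiteDimensional.continuousOn
      (hPM.mono_left (connectedComponentIn_subset _ _)) hx
      (mem_connectedComponentIn L.zero_mem)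
  rwa [map_zero, Submodule.projection_apply_eq_zero_iff] at hPx

end

end AddSubgroup

theorem stmt_4 (n : ℕ) (L : AddSubgroup (Fin n → ℝ)) (hL : IsClosed (L : Set (Fin n → ℝ))) :
    ∃ V : Submodule ℝ (Fin n → ℝ),
      connectedComponentIn (L : Set (Fin n → ℝ)) 0 = (V : Set (Fin n → ℝ)) :=
  ⟨_, L.connectedComponentIn_zero_eq_linealitySpace hL⟩
end

section
/- If L is a closed additive subgroup of ℝⁿ with connected component of identity L⁰, then the image of L in the quotient ℝⁿ/L⁰ is a discrete subgroup of ℝⁿ/L⁰. -/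
/-! Every line `ℝ • u` contained in `L` is a connected subset of `L` through `0`, so it lies in
`V = L⁰`. On the other hand, a closed subgroup of a finite-dimensional real space that accumulates at `0`
contains a line: rescale small nonzero elements `y` to the unit sphere, pass to a convergent
subsequence with limit `u`, and approximate `t • u` by the multiples `⌊t / ‖y‖⌋ • y`. Applied to
`L ∩ W` for a complement `W` of `V`, this shows that `V` is a neighbourhood of `0` in `L`, hence
`0` is isolated in the image of `L` in the quotient by `V`. -/

open Filter Topology

theorem mem_connectedComponentIn_of_forall_smul_mem {E : Type*} [AddCommGroup E] [Module ℝ E]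
    [TopologicalSpace E] [ContinuousSMul ℝ E] {s : Set E} {u : E} (hu : ∀ t : ℝ, t • u ∈ s) :
    u ∈ connectedComponentIn s 0 := by
  have hline : IsPreconnected (Set.range fun t : ℝ => t • u) :=
    isPreconnected_range (continuous_id.smul continuous_const)
  exact hline.subset_connectedComponentIn ⟨0, zero_smul ℝ u⟩ (Set.range_subset_iff.2 hu)
    ⟨1, one_smul ℝ u⟩

theorem QuotientAddGroup.discreteTopology_map_mk' {G : Type*} [AddCommGroup G]
    [TopologicalSpace G] [IsTopologicalAddGroup G] {L V : AddSubgroup G} (hVL : V ≤ L)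
    (hV : ∀ᶠ x in 𝓝 (0 : G), x ∈ L → x ∈ V) :
    DiscreteTopology (L.map (QuotientAddGroup.mk' V)) := by
  obtain ⟨U, hUV, hU, hU0⟩ := eventually_nhds_iff.1 hV
  rw [discreteTopology_iff_isOpen_singleton_zero, isOpen_induced_iff]
  refine ⟨(↑) '' U, QuotientAddGroup.isOpenMap_coe _ hU, Set.ext fun ⟨z, x, hxL, hxz⟩ => ⟨?_, ?_⟩⟩
  · rintro ⟨u, huU, rfl⟩
    have huL : u ∈ L := by
      have : -x + u ∈ V := QuotientAddGroup.eq.1 hxz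
      simpa using L.add_mem hxL (hVL this)
    exact Subtype.ext ((QuotientAddGroup.eq_zero_iff u).2 (hUV u huU huL))
  · intro hz
    exact ⟨0, hU0, by simpa using congrArg Subtype.val hz.symm⟩

section FiniteDimensional

variable {E : Type*} [NormedAddCommGroup E] [NormedSpace ℝ E] [FiniteDimensional ℝ E]

theorem AddSubgroup.exists_ne_zero_forall_smul_mem_of_isClosed {L : AddSubgroup E}
    (hL : IsClosed (L : Set E)) (h0 : AccPt (0 : E) (𝓟 L)) :
    ∃ u ≠ (0 : E), ∀ t : ℝ, t • u ∈ L := by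
  obtain ⟨y, hy0, hy⟩ := exists_seq_forall_of_frequently (accPt_iff_frequently.1 h0)
  have hsphere (k : ℕ) : ‖y k‖⁻¹ • y k ∈ Metric.sphere (0 : E) 1 := by
    simp [norm_smul, inv_mul_cancel₀ (norm_ne_zero_iff.2 (hy k).1)]
  obtain ⟨u, hu, φ, hφ, hlim⟩ := (isCompact_sphere (0 : E) 1).tendsto_subseq hsphere
  refine ⟨u, ne_zero_of_mem_sphere one_ne_zero ⟨u, hu⟩, fun t => ?_⟩
  set r : ℕ → ℝ := fun k => t / ‖y (φ k)‖
  have hsplit (k : ℕ) : (⌊r k⌋ : ℝ) • y (φ k) =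
      t • (‖y (φ k)‖⁻¹ • y (φ k)) - Int.fract (r k) • y (φ k) := by
    rw [smul_smul, ← div_eq_mul_inv, eq_sub_iff_add_eq, ← add_smul, Int.floor_add_fract]
  have hfract : Tendsto (fun k => Int.fract (r k) • y (φ k)) atTop (𝓝 0) := by
    refine squeeze_zero_norm (a := fun k => ‖y (φ k)‖) (fun k => ?_) ?_
    · rw [norm_smul, Real.norm_of_nonneg (Int.fract_nonneg _)]
      exact mul_le_of_le_one_left (norm_nonneg _) (Int.fract_lt_one _).le
    · simpa using (hy0.comp hφ.tendsto_atTop).norm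
  have hto : Tendsto (fun k => (⌊r k⌋ : ℝ) • y (φ k)) atTop (𝓝 (t • u)) := by
    simpa [hsplit] using (hlim.const_smul t).sub hfract
  refine hL.mem_of_tendsto hto (Eventually.of_forall fun k => ?_)
  rw [Int.cast_smul_eq_zsmul]
  exact zsmul_mem (hy (φ k)).2 _

theorem AddSubgroup.eventually_mem_of_forall_smul_mem {L : AddSubgroup E}
    (hL : IsClosed (L : Set E)) {V : Submodule ℝ E} (hVL : V.toAddSubgroup ≤ L)
    (hlines : ∀ u : E, (∀ t : ℝ, t • u ∈ L) → u ∈ V) :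
    ∀ᶠ x in 𝓝 (0 : E), x ∈ L → x ∈ V := by
  obtain ⟨W, hVW⟩ := V.exists_isCompl
  set q := W.projection V hVW.symm
  have hq : Tendsto q (𝓝 0) (𝓝 0) := by
    simpa using q.continuous_of_finiteDimensional.tendsto 0
  by_contra h
  have hacc : AccPt (0 : E) (𝓟 (L ⊓ W.toAddSubgroup : AddSubgroup E)) := by
    rw [accPt_iff_frequently]
    refine hq.frequently ((not_eventually.1 h).mono fun x hx => ?_)
    obtain ⟨hxL, hxV⟩ := Classical.not_imp.1 hx
    refine ⟨(W.projection_apply_eq_zero_iff hVW.symm).not.2 hxV, ?_, W.projection_apply_mem _ x⟩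
    simpa using L.sub_mem hxL (hVL (W.sub_projection_mem hVW.symm x))
  obtain ⟨u, hu0, hu⟩ :=
    (L ⊓ W.toAddSubgroup).exists_ne_zero_forall_smul_mem_of_isClosed
      (hL.inter W.closed_of_finiteDimensional) hacc
  exact hu0 (Submodule.disjoint_def.1 hVW.disjoint u (hlines u fun t => (hu t).1)
    (by simpa using (hu 1).2))

end FiniteDimensional

theorem stmt_5 (n : ℕ) (L : AddSubgroup (Fin n → ℝ)) (hL : IsClosed (L : Set (Fin n → ℝ)))
    (V : Submodule ℝ (Fin n → ℝ))
    (hV : (V : Set (Fin n → ℝ)) = connectedComponentIn (L : Set (Fin n → ℝ)) 0) :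
    DiscreteTopology (L.map (QuotientAddGroup.mk' V.toAddSubgroup)) := by
  have hVL : V.toAddSubgroup ≤ L := fun x hx => by
    have hx : x ∈ (V : Set (Fin n → ℝ)) := hx
    exact connectedComponentIn_subset _ _ (hV ▸ hx)
  refine QuotientAddGroup.discreteTopology_map_mk' hVL
    (L.eventually_mem_of_forall_smul_mem hL hVL fun u hu => ?_)
  rw [← SetLike.mem_coe, hV]
  exact mem_connectedComponentIn_of_forall_smul_mem hu
end

section
/- If L is an additive subgroup of ℝⁿ with topological closure L̄, and L̄⁰ is the connected component of 0 in L̄, then L ∩ L̄⁰ is dense in L̄⁰. -/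
open Filter Topology Metric Set

/-!
A closed subgroup `H` of `ℝⁿ` contains a largest linear subspace `V = {x | ℝ x ⊆ H}`. Near `0`,
`H` lies inside `V`: otherwise, projecting small elements of `H \ V` onto a complement `W` of `V`
gives nonzero elements `h_k` of `H ∩ W` tending to `0`, and any limit `u` of the directions
`h_k / ‖h_k‖` spans a line in `H ∩ W`, since `t u` is the limit of the integer multiples
`⌊t / ‖h_k‖⌋ h_k`; this contradicts the maximality of `V`. So `V` is open in `H`, hence it is the
component of `0` in `H = L̄`, and an open subset of `L̄` lies in the closure of its intersection
with `L`.
-/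

theorem tendsto_floor_div_mul_self {α ι : Type*} [Field α] [LinearOrder α] [IsStrictOrderedRing α]
    [FloorRing α] [TopologicalSpace α] [OrderTopology α] {l : Filter ι} {r : ι → α}
    (hr : Tendsto r l (𝓝[>] 0)) (t : α) :
    Tendsto (fun i => (⌊t / r i⌋ : α) * r i) l (𝓝 t) := by
  obtain ⟨hr0, hrpos⟩ := tendsto_nhdsWithin_iff.1 hr
  refine tendsto_of_tendsto_of_tendsto_of_le_of_le' (g := fun i => t - r i)
    (by simpa using tendsto_const_nhds.sub hr0) tendsto_const_nhds ?_ ?_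
  · filter_upwards [hrpos] with i (hi : 0 < r i)
    refine (div_le_iff₀ hi).1 ?_
    rw [sub_div, div_self hi.ne']
    exact (Int.sub_one_lt_floor _).le
  · filter_upwards [hrpos] with i (hi : 0 < r i)
    exact (le_div_iff₀ hi).1 (Int.floor_le _)

namespace AddSubgroup

variable {E : Type*} [NormedAddCommGroup E] [NormedSpace ℝ E]

theorem exists_ne_zero_forall_smul_mem_of_tendsto_zero [ProperSpace E] {H : AddSubgroup E}
    (hH : IsClosed (H : Set E)) {h : ℕ → E} (hmem : ∀ k, h k ∈ H) (hne : ∀ k, h k ≠ 0)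
    (hlim : Tendsto h atTop (𝓝 0)) : ∃ u ≠ 0, ∀ t : ℝ, t • u ∈ H := by
  have hunit : ∀ k, ‖h k‖⁻¹ • h k ∈ sphere (0 : E) 1 := fun k => by simp [norm_smul, hne k]
  obtain ⟨u, hu, φ, hφ, hconv⟩ := (isCompact_sphere (0 : E) 1).tendsto_subseq hunit
  refine ⟨u, ne_of_mem_sphere hu one_ne_zero, fun t => ?_⟩
  have hr : Tendsto (fun k => ‖h (φ k)‖) atTop (𝓝[>] 0) :=
    tendsto_nhdsWithin_iff.2 ⟨by simpa using (hlim.comp hφ.tendsto_atTop).norm,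
      Eventually.of_forall fun k => norm_pos_iff.2 (hne _)⟩
  refine hH.mem_of_tendsto ((tendsto_floor_div_mul_self hr t).smul hconv)
    (Eventually.of_forall fun k => ?_)
  have hzsmul : ((⌊t / ‖h (φ k)‖⌋ : ℝ) * ‖h (φ k)‖) • (‖h (φ k)‖⁻¹ • h (φ k)) =
      ⌊t / ‖h (φ k)‖⌋ • h (φ k) := by
    rw [mul_smul, smul_inv_smul₀ (norm_ne_zero_iff.2 (hne _)), Int.cast_smul_eq_zsmul]
  rw [Function.comp_apply, hzsmul]
  exact zsmul_mem (hmem (φ k)) _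

def lineality (H : AddSubgroup E) : Submodule ℝ E where
  carrier := {x | ∀ t : ℝ, t • x ∈ H}
  add_mem' hx hy t := by simpa [smul_add] using add_mem (hx t) (hy t)
  zero_mem' t := by simp
  smul_mem' c x hx t := by simpa [smul_smul] using hx (t * c)

theorem mem_lineality {H : AddSubgroup E} {x : E} : x ∈ H.lineality ↔ ∀ t : ℝ, t • x ∈ H :=
  Iff.rfl

theorem lineality_subset (H : AddSubgroup E) : (H.lineality : Set E) ⊆ H :=
  fun x hx => by simpa using hx 1

variable [FiniteDimensional ℝ E] {H : AddSubgroup E}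

theorem exists_pos_forall_norm_lt_mem_lineality (hH : IsClosed (H : Set E)) :
    ∃ ε > 0, ∀ g ∈ H, ‖g‖ < ε → g ∈ H.lineality := by
  by_contra! hsmall
  choose g hgH hgε hgV using fun k : ℕ => hsmall (1 / (k + 1)) Nat.one_div_pos_of_nat
  obtain ⟨W, hW⟩ := H.lineality.exists_isCompl
  set π := W.projection H.lineality hW.symm
  have hπH : ∀ k, π (g k) ∈ H := fun k => by
    simpa using sub_mem (hgH k) (lineality_subset H (Submodule.sub_projection_mem hW.symm (g k)))
  have hπ0 : Tendsto (fun k => π (g k)) atTop (𝓝 0) := by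
    have hg0 : Tendsto g atTop (𝓝 0) :=
      squeeze_zero_norm (fun k => (hgε k).le) tendsto_one_div_add_atTop_nhds_zero_nat
    have := (π.continuous_of_finiteDimensional.tendsto 0).comp hg0
    rwa [map_zero] at this
  obtain ⟨u, hu0, hu⟩ := exists_ne_zero_forall_smul_mem_of_tendsto_zero (H := H ⊓ W.toAddSubgroup)
    (hH.inter W.closed_of_finiteDimensional)
    (fun k => ⟨hπH k, Submodule.projection_apply_mem _ _⟩)
    (fun k => by simpa [π] using hgV k) hπ0
  have huV : u ∈ H.lineality := mem_lineality.2 fun t => (hu t).1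
  have huW : u ∈ W := by simpa using (hu 1).2
  exact hu0 (Submodule.disjoint_def.1 hW.disjoint u huV huW)

theorem exists_pos_thickening_inter_eq_lineality (hH : IsClosed (H : Set E)) :
    ∃ ε > 0, thickening ε (H.lineality : Set E) ∩ H = H.lineality := by
  obtain ⟨ε, hε, hsmall⟩ := exists_pos_forall_norm_lt_mem_lineality hH
  refine ⟨ε, hε, Subset.antisymm ?_
    fun x hx => ⟨self_subset_thickening hε _ hx, lineality_subset H hx⟩⟩
  rintro x ⟨hx, hxH⟩
  obtain ⟨v, hv, hdist⟩ := mem_thickening_iff.1 hx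
  have hxv : x - v ∈ H.lineality :=
    hsmall _ (sub_mem hxH (lineality_subset H hv)) (by rwa [← dist_eq_norm])
  simpa using add_mem hxv hv

theorem connectedComponentIn_zero_eq_lineality (hH : IsClosed (H : Set E)) :
    connectedComponentIn (H : Set E) 0 = H.lineality := by
  refine Subset.antisymm ?_ (H.lineality.convex.isPreconnected.subset_connectedComponentIn
    (H.lineality.zero_mem : (0 : E) ∈ (H.lineality : Set E)) (lineality_subset H))
  obtain ⟨ε, hε, hthick⟩ := exists_pos_thickening_inter_eq_lineality hH
  have hmem : ∀ x ∈ connectedComponentIn H 0, x ∈ thickening ε (H.lineality : Set E) →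
      x ∈ H.lineality := fun x hxC hx => by
    rw [← SetLike.mem_coe, ← hthick]
    exact ⟨hx, connectedComponentIn_subset _ _ hxC⟩
  have hsub : connectedComponentIn H 0 ⊆ thickening (ε / 2) (H.lineality : Set E) := by
    refine isPreconnected_connectedComponentIn.subset_of_closure_inter_subset isOpen_thickening
      ⟨0, mem_connectedComponentIn H.zero_mem,
        self_subset_thickening (half_pos hε) _ H.lineality.zero_mem⟩ ?_
    rintro x ⟨hxcl, hxC⟩
    refine self_subset_thickening (half_pos hε) _ (hmem x hxC ?_)
    exact cthickening_subset_thickening' hε (half_lt_self hε) _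
      (closure_thickening_subset_cthickening _ _ hxcl)
  exact fun x hxC => hmem x hxC (thickening_mono (half_le_self hε.le) _ (hsub hxC))

end AddSubgroup

theorem stmt_6 (n : ℕ) (L : AddSubgroup (Fin n → ℝ)) :
    connectedComponentIn (closure (L : Set (Fin n → ℝ))) 0 ⊆
      closure ((L : Set (Fin n → ℝ)) ∩
        connectedComponentIn (closure (L : Set (Fin n → ℝ))) 0) := by
  have hH : IsClosed (L.topologicalClosure : Set (Fin n → ℝ)) := L.isClosed_topologicalClosure
  obtain ⟨ε, -, hthick⟩ := L.topologicalClosure.exists_pos_thickening_inter_eq_lineality hH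
  rw [← L.topologicalClosure_coe, L.topologicalClosure.connectedComponentIn_zero_eq_lineality hH,
    ← hthick]
  refine isOpen_thickening.inter_closure.trans (closure_mono ?_)
  rintro x ⟨hxO, hxL⟩
  exact ⟨hxL, hxO, subset_closure hxL⟩
end
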